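/- Let a, c be real numbers with c > a + 1 and a > 0. Define S_{mn} = n! (a)_{m+1} (c-a)_n / ((c)_{m+n} (c+m)_{n+1}) and R_{mn}(z) = S_{mn} · z^{m+n+1} · ₂F₁(a+m+1, n+1; c+m+n+1; z). Then there exists a constant C > 0, depending only on a and c, such that for all positive integers m, n with m ≥ n - 1 and all complex z with |z| < 1, |R_{mn}(z)| ≤ C · (n! / (c)_n) · ((a+1)_m / (c+n)_m) · |z|^{m+n+1}. -/

import Mathlib

/-!
Euler's integral writes the `k`-th coefficient of `₂F₁(a, b; c; ·)` as
`(a)_k / k! · B(b + k, c - b) / B(b, c - b)`. Under the integral, the partial sums of the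
binomial series of `(1 - t)^(-a)` are at most `(1 - t)^(-a)`, so for `|z| ≤ 1` the series is
bounded by Gauss's value `B(b, c - a - b) / B(b, c - b)` of `₂F₁(a, b; c; 1)`. For `b = n + 1`
this is a quotient of Pochhammer symbols, and for the parameters of `R_{mn}` its product with
`S_{mn}` is exactly `a / (c - a - 1) · n! / (c)_n · (a + 1)_m / (c + n)_m`.
-/

/-- The Pochhammer symbol `(x)_k = x (x+1) ⋯ (x+k-1)` for a real number `x`. -/
noncomputable def poch (x : ℝ) (k : ℕ) : ℝ := ∏ i ∈ Finset.range k, (x + i)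

/-- The Gauss hypergeometric series `₂F₁(a, b; c; z)` with real parameters, for a
complex argument `z` (convergent for `|z| < 1`). -/
noncomputable def hyp2F1 (a b c : ℝ) (z : ℂ) : ℂ :=
  ∑' k : ℕ, (((poch a k * poch b k) / (poch c k * (Nat.factorial k)) : ℝ) : ℂ) * z ^ k

/-- The constant `S_{mn} = n! (a)_{m+1} (c-a)_n / ((c)_{m+n} (c+m)_{n+1})`. -/
noncomputable def padeS (m n : ℕ) (a c : ℝ) : ℝ :=
  (Nat.factorial n) * poch a (m + 1) * poch (c - a) n /
    (poch c (m + n) * poch (c + m) (n + 1))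

/-- The Padé remainder `R_{mn}(z) = S_{mn} z^{m+n+1} ₂F₁(a+m+1, n+1; c+m+n+1; z)`. -/
noncomputable def padeR (m n : ℕ) (a c : ℝ) (z : ℂ) : ℂ :=
  ((padeS m n a c : ℝ) : ℂ) * z ^ (m + n + 1) *
    hyp2F1 (a + m + 1) ((n : ℝ) + 1) (c + m + n + 1) z

open Finset ProbabilityTheory
open scoped Nat

lemma poch_pos {x : ℝ} (hx : 0 < x) (k : ℕ) : 0 < poch x k :=
  prod_pos fun _ _ => by positivity

lemma poch_add (x : ℝ) (j k : ℕ) : poch x (j + k) = poch x j * poch (x + j) k := by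
  rw [poch, prod_range_add]
  congr 1
  exact prod_congr rfl fun i _ => by push_cast; ring

lemma poch_succ (x : ℝ) (k : ℕ) : poch x (k + 1) = x * poch (x + 1) k := by
  rw [add_comm, poch_add]
  simp [poch]

lemma poch_eq_ascPochhammer_eval (x : ℝ) (k : ℕ) : poch x k = (ascPochhammer ℝ k).eval x := by
  induction k with
  | zero => simp [poch]
  | succ k ih => rw [poch, prod_range_succ, ← poch, ih, ascPochhammer_succ_eval]

lemma Ring.choose_add_sub_one_eq_poch_div_factorial (x : ℝ) (k : ℕ) :
    Ring.choose (x + k - 1) k = poch x k / k ! := by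
  rw [← Ring.multichoose_eq, eq_div_iff (by positivity), mul_comm, ← nsmul_eq_mul,
    Ring.factorial_nsmul_multichoose_eq_ascPochhammer, Polynomial.ascPochhammer_smeval_eq_eval,
    poch_eq_ascPochhammer_eval]

lemma Real.Gamma_add_nat_eq_mul_poch {x : ℝ} (hx : 0 < x) (k : ℕ) :
    Real.Gamma (x + k) = Real.Gamma x * poch x k := by
  induction k with
  | zero => simp [poch]
  | succ k ih =>
    rw [Nat.cast_succ, ← add_assoc, Real.Gamma_add_one (by positivity), ih]
    simp only [poch, prod_range_succ]
    ring

lemma hasSum_poch_div_factorial_mul_pow (α : ℝ) {t : ℝ} (ht : |t| < 1) :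
    HasSum (fun k => poch α k / k ! * t ^ k) (1 / (1 - t) ^ α) := by
  have := (Real.one_div_one_sub_rpow_hasFPowerSeriesOnBall_zero α).hasSum
    (y := t) (by simpa [enorm_eq_nnnorm, ← NNReal.coe_lt_one] using ht)
  simpa [Ring.choose_add_sub_one_eq_poch_div_factorial, mul_comm] using this

section Beta

open intervalIntegral

lemma integral_rpow_mul_one_sub_rpow {u v : ℝ} (hu : 0 < u) (hv : 0 < v) :
    ∫ t in (0 : ℝ)..1, t ^ (u - 1) * (1 - t) ^ (v - 1) = beta u v := by
  have hB : ((beta u v : ℝ) : ℂ) = Complex.betaIntegral u v := by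
    rw [Complex.betaIntegral_eq_Gamma_mul_div _ _ (by simpa) (by simpa), beta]
    push_cast [← Complex.Gamma_ofReal]
    rfl
  apply Complex.ofReal_injective
  rw [← integral_ofReal, hB, Complex.betaIntegral]
  refine integral_congr fun t ht => ?_
  rw [Set.uIcc_of_le zero_le_one] at ht
  push_cast [Complex.ofReal_cpow ht.1, Complex.ofReal_cpow (sub_nonneg.2 ht.2)]
  rfl

lemma intervalIntegrable_rpow_mul_one_sub_rpow {u v : ℝ} (hu : 0 < u) (hv : 0 < v) :
    IntervalIntegrable (fun t : ℝ => t ^ (u - 1) * (1 - t) ^ (v - 1)) MeasureTheory.volume 0 1 :=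
  intervalIntegrable_of_integral_ne_zero <| by
    rw [integral_rpow_mul_one_sub_rpow hu hv]; exact (beta_pos hu hv).ne'

lemma beta_add_nat_left {u v : ℝ} (hu : 0 < u) (hv : 0 < v) (k : ℕ) :
    beta (u + k) v = beta u v * poch u k / poch (u + v) k := by
  have huv : 0 < u + v := by positivity
  rw [beta, beta, add_right_comm, Real.Gamma_add_nat_eq_mul_poch hu,
    Real.Gamma_add_nat_eq_mul_poch huv]
  have := poch_pos huv k
  have := Real.Gamma_pos_of_pos huv
  field_simp

lemma beta_natCast_add_one_div_beta {ε v : ℝ} (hε : 0 < ε) (hv : 0 < v) (k : ℕ) :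
    beta ((k : ℝ) + 1) ε / beta ((k : ℝ) + 1) v = poch v (k + 1) / poch ε (k + 1) := by
  have hk : Real.Gamma ((k : ℝ) + 1) ≠ 0 := (Real.Gamma_pos_of_pos (by positivity)).ne'
  have hε' := Real.Gamma_pos_of_pos hε
  have hv' := Real.Gamma_pos_of_pos hv
  have := poch_pos hε (k + 1)
  rw [beta, beta, add_comm _ ε, add_comm _ v, ← Nat.cast_succ, Real.Gamma_add_nat_eq_mul_poch hε,
    Real.Gamma_add_nat_eq_mul_poch hv]
  field_simp

lemma sum_poch_div_factorial_mul_beta_le {α β v : ℝ} (hα : 0 < α) (hβ : 0 < β) (hαv : α < v)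
    (K : ℕ) : ∑ k ∈ range K, poch α k / k ! * beta (β + k) v ≤ beta β (v - α) := by
  have hv : 0 < v := hα.trans hαv
  have hint (k : ℕ) := intervalIntegrable_rpow_mul_one_sub_rpow
    (add_pos_of_pos_of_nonneg hβ k.cast_nonneg) hv
  have hsum : ∑ k ∈ range K, poch α k / k ! * beta (β + k) v
      = ∫ t in (0 : ℝ)..1, ∑ k ∈ range K,
          poch α k / k ! * (t ^ (β + k - 1) * (1 - t) ^ (v - 1)) := by
    rw [integral_finsetSum fun k _ => (hint k).const_mul _]
    refine sum_congr rfl fun k _ => ?_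
    rw [integral_const_mul, integral_rpow_mul_one_sub_rpow (by positivity) hv]
  rw [hsum, ← integral_rpow_mul_one_sub_rpow hβ (sub_pos.2 hαv)]
  refine integral_mono_on_of_le_Ioo zero_le_one
    (by simpa only [← sum_fn] using IntervalIntegrable.sum _ fun k _ => (hint k).const_mul _)
    (intervalIntegrable_rpow_mul_one_sub_rpow hβ (sub_pos.2 hαv)) fun t ⟨ht0, ht1⟩ => ?_
  have h1t : 0 < 1 - t := sub_pos.2 ht1
  have hbinom : ∑ k ∈ range K, poch α k / k ! * t ^ k ≤ 1 / (1 - t) ^ α :=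
    sum_le_hasSum _ (fun k _ => by have := poch_pos hα k; positivity)
      (hasSum_poch_div_factorial_mul_pow α (by rw [abs_lt]; constructor <;> linarith))
  calc ∑ k ∈ range K, poch α k / k ! * (t ^ (β + k - 1) * (1 - t) ^ (v - 1))
      = t ^ (β - 1) * (1 - t) ^ (v - 1) * ∑ k ∈ range K, poch α k / k ! * t ^ k := by
        rw [mul_sum]
        refine sum_congr rfl fun k _ => ?_
        rw [add_sub_right_comm, Real.rpow_add_natCast ht0.ne']
        ring
    _ ≤ t ^ (β - 1) * (1 - t) ^ (v - 1) * (1 / (1 - t) ^ α) := by gcongr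
    _ = t ^ (β - 1) * (1 - t) ^ (v - α - 1) := by
        rw [sub_right_comm v, Real.rpow_sub h1t (v - 1) α]
        ring

end Beta

lemma sum_range_hyp2F1_coeff_le {a b c : ℝ} (ha : 0 < a) (hb : 0 < b) (habc : a + b < c)
    (K : ℕ) : ∑ k ∈ range K, poch a k * poch b k / (poch c k * k !)
      ≤ beta b (c - a - b) / beta b (c - b) := by
  have hcb : 0 < c - b := by linarith
  have hterm (k : ℕ) : poch a k * poch b k / (poch c k * k !)
      = poch a k / k ! * beta (b + k) (c - b) / beta b (c - b) := by
    rw [beta_add_nat_left hb hcb, add_sub_cancel]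
    have := poch_pos (show 0 < c by linarith) k
    have := beta_pos hb hcb
    field_simp
  simp only [hterm, ← sum_div]
  rw [sub_right_comm]
  gcongr
  · exact (beta_pos hb hcb).le
  · exact sum_poch_div_factorial_mul_beta_le ha hb (by linarith) K

lemma norm_hyp2F1_le {a b c : ℝ} (ha : 0 < a) (hb : 0 < b) (habc : a + b < c) {z : ℂ}
    (hz : ‖z‖ ≤ 1) : ‖hyp2F1 a b c z‖ ≤ beta b (c - a - b) / beta b (c - b) := by
  set coeff : ℕ → ℝ := fun k => poch a k * poch b k / (poch c k * k !)
  have hcoeff (k : ℕ) : 0 ≤ coeff k := by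
    have := poch_pos ha k; have := poch_pos hb k
    have := poch_pos (show 0 < c by linarith) k
    positivity
  have hpartial := sum_range_hyp2F1_coeff_le ha hb habc
  have hsummable : Summable coeff := summable_of_sum_range_le hcoeff hpartial
  refine (tsum_of_norm_bounded hsummable.hasSum fun k => ?_).trans
    (hsummable.tsum_le_of_sum_range_le hpartial)
  rw [norm_mul, norm_pow, Complex.norm_real, Real.norm_of_nonneg (hcoeff k)]
  exact mul_le_of_le_one_right (hcoeff k) (pow_le_one₀ (norm_nonneg z) hz)

lemma padeS_nonneg {a c : ℝ} (ha : 0 < a) (hac : a < c) (m n : ℕ) : 0 ≤ padeS m n a c := by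
  have hc : 0 < c := ha.trans hac
  have := poch_pos ha (m + 1)
  have := poch_pos (sub_pos.2 hac) n
  have := poch_pos hc (m + n)
  have := poch_pos (show 0 < c + m by positivity) (n + 1)
  unfold padeS
  positivity

lemma padeS_mul_poch_div_poch {a c : ℝ} (hc : 0 < c) (hac : a + 1 < c) (m n : ℕ) :
    padeS m n a c * (poch (c + m) (n + 1) / poch (c - a - 1) (n + 1))
      = a / (c - a - 1) * (n ! / poch c n) * (poch (a + 1) m / poch (c + n) m) := by
  have hca : 0 < c - a - 1 := by linarith
  rw [padeS, poch_succ (c - a - 1), show c - a - 1 + 1 = c - a by ring, poch_succ a, add_comm m n,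
    poch_add c n m]
  have := poch_pos hc n
  have := poch_pos (show 0 < c + n by positivity) m
  have := poch_pos (show 0 < c + m by positivity) (n + 1)
  have := poch_pos (show 0 < c - a by linarith) n
  field_simp

/-- For `c > a + 1 > 1` there is a constant `C > 0` depending only on `a, c` with
`|R_{mn}(z)| ≤ C (n!/(c)_n) ((a+1)_m/(c+n)_m) |z|^{m+n+1}` for all `m ≥ n - 1`, `|z| < 1`. -/
theorem pade_remainder_bound_convergent (a c : ℝ) (ha : 0 < a) (hc : c > a + 1) :
    ∃ C : ℝ, 0 < C ∧ ∀ m n : ℕ, 0 < m → 0 < n → n - 1 ≤ m →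
      ∀ z : ℂ, ‖z‖ < 1 →
        ‖padeR m n a c z‖ ≤
          C * ((Nat.factorial n) / poch c n) * (poch (a + 1) m / poch (c + n) m) *
            ‖z‖ ^ (m + n + 1) := by
  have hca : 0 < c - a - 1 := by linarith
  have hc0 : 0 < c := by linarith
  refine ⟨a / (c - a - 1), by positivity, fun m n _ _ _ z hz => ?_⟩
  have hF := norm_hyp2F1_le (a := a + m + 1) (b := n + 1) (c := c + m + n + 1)
    (by positivity) (by positivity) (by linarith) hz.le
  rw [show c + m + n + 1 - (a + m + 1) - (n + 1) = c - a - 1 by ring,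
    show c + m + n + 1 - (n + 1) = c + m by ring,
    beta_natCast_add_one_div_beta hca (by positivity)] at hF
  have hS : 0 ≤ padeS m n a c := padeS_nonneg ha (by linarith) m n
  calc ‖padeR m n a c z‖
      = padeS m n a c * ‖z‖ ^ (m + n + 1) * ‖hyp2F1 (a + m + 1) (n + 1) (c + m + n + 1) z‖ := by
        rw [padeR, norm_mul, norm_mul, norm_pow, Complex.norm_real, Real.norm_of_nonneg hS]
    _ ≤ padeS m n a c * ‖z‖ ^ (m + n + 1) * (poch (c + m) (n + 1) / poch (c - a - 1) (n + 1)) := by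
        gcongr
    _ = _ := by
        rw [mul_right_comm, padeS_mul_poch_div_poch hc0 hc]
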